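/- arXiv:math/0309240 — 3 statements merged into one kernel-verified Lean document; each statement's English description precedes it below -/
import Mathlib

section
/- Let σ' be the cone in (N ⊕ ℤ^k) ⊗ ℝ generated by t̃_0, ..., t̃_{j-1}, s̃_{j+1}, ..., s̃_{k+1} together with vectors e_i ∈ N (for indices i in some set), where the s̃ and t̃ vectors are defined as in the embedding construction. If a nonnegative combination α_{t_0} t̃_0 + ... + α_{t_{j-1}} t̃_{j-1} + α_{s_{j+1}} s̃_{j+1} + ... + α_{s_{k+1}} s̃_{k+1} + Σ_i α_i e_i lies in the subspace N_ℝ ⊕ 0, then α_{t_0} = ... = α_{t_{j-1}} = α_{s_{j+1}} = ... = α_{s_{k+1}}, and the combination equals α_{s_{k+1}} e_{i_j} + Σ_i α_i e_i where e_{i_j} = e + j·w. -/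
def stilR (V : Type*) [AddCommGroup V] (k : ℕ) (e : V) (j : ℕ) : V × (Fin k → ℝ) :=
  if j = k + 1 then (e, fun _ => -1)
  else (0, fun i => if (i : ℕ) + 1 = j then 1 else 0)

def ttilR (V : Type*) [AddCommGroup V] (k : ℕ) (e w : V) (j : ℕ) : V × (Fin k → ℝ) :=
  stilR V k e (j + 1) + (w, 0)

lemma stilR_snd_apply (V : Type*) [AddCommGroup V] (k : ℕ) (e : V) (a : ℕ) (i : Fin k) :
    (stilR V k e a).2 i = if a = k + 1 then -1 else if (i : ℕ) + 1 = a then 1 else 0 := by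
  unfold stilR; split <;> rfl

lemma ttilR_snd_apply (V : Type*) [AddCommGroup V] (k : ℕ) (e w : V) (a : ℕ) (i : Fin k) :
    (ttilR V k e w a).2 i = if a = k then -1 else if (i : ℕ) = a then 1 else 0 := by
  unfold ttilR
  rw [Prod.snd_add, Pi.add_apply, stilR_snd_apply]
  simp only [Nat.add_right_cancel_iff, Pi.zero_apply, add_zero]

lemma stilR_fst (V : Type*) [AddCommGroup V] (k : ℕ) (e : V) (a : ℕ) (ha : a ≠ k + 1) :
    (stilR V k e a).1 = 0 := by
  unfold stilR; rw [if_neg ha]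

lemma ttilR_fst (V : Type*) [AddCommGroup V] (k : ℕ) (e w : V) (a : ℕ) (ha : a ≠ k) :
    (ttilR V k e w a).1 = w := by
  unfold ttilR
  rw [Prod.fst_add, stilR_fst V k e _ (by omega), zero_add]

/-- If a nonnegative combination of `t̃_0,…,t̃_{j-1}, s̃_{j+1},…,s̃_{k+1}` and of
vectors `e_i ∈ N_ℝ ⊕ 0` lies in the subspace `N_ℝ ⊕ 0`, then all coefficients
`α_{t_0}, …, α_{t_{j-1}}, α_{s_{j+1}}, …, α_{s_{k+1}}` are equal, and the combination
equals `α_{s_{k+1}} • e_{i_j} + Σ_i α_i e_i`, where `e_{i_j} = e + j • w`. -/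
theorem stmt_2 {V : Type*} [AddCommGroup V] [Module ℝ V] {ι : Type*} [Fintype ι]
    (k j : ℕ) (hj : j ≤ k) (e w : V) (αt αs : ℕ → ℝ) (c : ι → ℝ) (E : ι → V)
    (hαt : ∀ a, 0 ≤ αt a) (hαs : ∀ a, 0 ≤ αs a) (hc : ∀ i, 0 ≤ c i)
    (h : ((∑ a ∈ Finset.range j, αt a • ttilR V k e w a) +
          (∑ a ∈ Finset.Icc (j + 1) (k + 1), αs a • stilR V k e a) +
          ∑ i, c i • ((E i, 0) : V × (Fin k → ℝ))).2 = 0) :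
    ((∀ a < j, αt a = αs (k + 1)) ∧
      ∀ a ∈ Finset.Icc (j + 1) (k + 1), αs a = αs (k + 1)) ∧
    (∑ a ∈ Finset.range j, αt a • ttilR V k e w a) +
        (∑ a ∈ Finset.Icc (j + 1) (k + 1), αs a • stilR V k e a) +
        (∑ i, c i • ((E i, 0) : V × (Fin k → ℝ))) =
      (αs (k + 1) • (e + j • w) + ∑ i, c i • E i, (0 : Fin k → ℝ)) := by
  have hsplit : Finset.Icc (j + 1) (k + 1) = insert (k + 1) (Finset.Icc (j + 1) k) := by
    ext a; simp only [Finset.mem_Icc, Finset.mem_insert]; omega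
  have hnotmem : k + 1 ∉ Finset.Icc (j + 1) k := by
    simp only [Finset.mem_Icc]; omega
  have key : ∀ i : Fin k, (if (i : ℕ) < j then αt i else αs ((i : ℕ) + 1)) = αs (k + 1) := by
    intro i
    have hh := congrFun h i
    simp only [Prod.snd_add, Prod.snd_sum, Prod.smul_snd, Pi.add_apply, Finset.sum_apply,
      Pi.smul_apply, smul_eq_mul, Pi.zero_apply, smul_zero, mul_zero,
      Finset.sum_const_zero, add_zero] at hh
    have h1 : ∑ a ∈ Finset.range j, αt a * (ttilR V k e w a).2 i
        = if (i : ℕ) < j then αt i else 0 := by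
      calc ∑ a ∈ Finset.range j, αt a * (ttilR V k e w a).2 i
          = ∑ a ∈ Finset.range j, if (i : ℕ) = a then αt a else 0 := by
            refine Finset.sum_congr rfl fun a ha => ?_
            simp only [Finset.mem_range] at ha
            rw [ttilR_snd_apply, if_neg (by omega), mul_ite, mul_one, mul_zero]
        _ = if (i : ℕ) ∈ Finset.range j then αt i else 0 := Finset.sum_ite_eq _ _ _
        _ = if (i : ℕ) < j then αt i else 0 := by simp only [Finset.mem_range]
    have h2 : ∑ a ∈ Finset.Icc (j + 1) (k + 1), αs a * (stilR V k e a).2 i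
        = (if j ≤ (i : ℕ) then αs ((i : ℕ) + 1) else 0) - αs (k + 1) := by
      have hrest : ∑ a ∈ Finset.Icc (j + 1) k, αs a * (stilR V k e a).2 i
          = if j ≤ (i : ℕ) then αs ((i : ℕ) + 1) else 0 := by
        calc ∑ a ∈ Finset.Icc (j + 1) k, αs a * (stilR V k e a).2 i
            = ∑ a ∈ Finset.Icc (j + 1) k, if (i : ℕ) + 1 = a then αs a else 0 := by
              refine Finset.sum_congr rfl fun a ha => ?_
              simp only [Finset.mem_Icc] at ha
              rw [stilR_snd_apply, if_neg (by omega), mul_ite, mul_one, mul_zero]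
          _ = if (i : ℕ) + 1 ∈ Finset.Icc (j + 1) k then αs ((i : ℕ) + 1) else 0 :=
              Finset.sum_ite_eq _ _ _
          _ = if j ≤ (i : ℕ) then αs ((i : ℕ) + 1) else 0 := by
              simp only [Finset.mem_Icc]
              have hik : (i : ℕ) < k := i.isLt
              have hcond : (j + 1 ≤ (i : ℕ) + 1 ∧ (i : ℕ) + 1 ≤ k) ↔ j ≤ (i : ℕ) := by omega
              rw [if_congr hcond rfl rfl]
      rw [hsplit, Finset.sum_insert hnotmem, stilR_snd_apply, if_pos rfl, hrest]
      ring
    rw [h1, h2] at hh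
    by_cases hij : (i : ℕ) < j
    · rw [if_pos hij] at hh ⊢
      rw [if_neg (by omega)] at hh
      linarith
    · rw [if_neg hij] at hh ⊢
      rw [if_pos (by omega)] at hh
      linarith
  have part1 : ∀ a < j, αt a = αs (k + 1) := by
    intro a ha
    have hak : a < k := lt_of_lt_of_le ha hj
    have := key ⟨a, hak⟩
    rwa [if_pos ha] at this
  have part2 : ∀ a ∈ Finset.Icc (j + 1) (k + 1), αs a = αs (k + 1) := by
    intro a ha
    simp only [Finset.mem_Icc] at ha
    rcases eq_or_lt_of_le ha.2 with h' | h'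
    · rw [h']
    · have hak : a - 1 < k := by omega
      have := key ⟨a - 1, hak⟩
      rw [if_neg (by simp; omega)] at this
      simpa only [show a - 1 + 1 = a by omega] using this
  refine ⟨⟨part1, part2⟩, ?_⟩
  rw [Prod.ext_iff]
  refine ⟨?_, h⟩
  simp only [Prod.fst_add, Prod.fst_sum, Prod.smul_fst]
  have f1 : ∑ a ∈ Finset.range j, αt a • (ttilR V k e w a).1
      = αs (k + 1) • (j • w) := by
    have step : ∀ a ∈ Finset.range j, αt a • (ttilR V k e w a).1 = αs (k + 1) • w := by
      intro a ha
      simp only [Finset.mem_range] at ha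
      rw [ttilR_fst V k e w a (by omega), part1 a ha]
    rw [Finset.sum_congr rfl step, Finset.sum_const, Finset.card_range,
      ← Nat.cast_smul_eq_nsmul ℝ, ← Nat.cast_smul_eq_nsmul ℝ j w, smul_smul, smul_smul,
      mul_comm]
  have f2 : ∑ a ∈ Finset.Icc (j + 1) (k + 1), αs a • (stilR V k e a).1
      = αs (k + 1) • e := by
    have step : ∀ a ∈ Finset.Icc (j + 1) k, αs a • (stilR V k e a).1 = 0 := by
      intro a ha
      simp only [Finset.mem_Icc] at ha
      rw [stilR_fst V k e a (by omega), smul_zero]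
    rw [hsplit, Finset.sum_insert hnotmem, Finset.sum_congr rfl step,
      Finset.sum_const_zero, add_zero]
    unfold stilR; rw [if_pos rfl]
  rw [f1, f2, smul_add]
  abel
end

section
/- The k × (2k+1) matrix M over a field K whose j-th row (j = 1,...,k) is the gradient of f_j = s_{j+1} t_j − s_j t_{j-1} with respect to the variables (s_1, ..., s_{k+1}, t_0, ..., t_k), evaluated at a point where the relations f_j = 0 hold and where there exists l with s_j ≠ 0 for j ≤ l−1 and t_j ≠ 0 for j ≥ l (and no s_j, t_j simultaneously zero), has rank exactly k. -/
/-- The Jacobian matrix of `f_j = s_{j+1} t_j − s_j t_{j-1}` (`j = 1,…,k`) with respect to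
the variables `(s_1, …, s_{k+1}, t_0, …, t_k)`: row `j` has entries `−t_{j-1}` at `s_j`,
`t_j` at `s_{j+1}`, `−s_j` at `t_{j-1}`, `s_{j+1}` at `t_j`, and `0` elsewhere. -/
def jacMat {K : Type*} [Field K] (k : ℕ) (s t : ℕ → K) :
    Matrix (Fin k) (Fin (k + 1) ⊕ Fin (k + 1)) K :=
  Matrix.of fun j i =>
    Sum.elim
      (fun a : Fin (k + 1) =>
        if (a : ℕ) = (j : ℕ) then -t (j : ℕ)
        else if (a : ℕ) = (j : ℕ) + 1 then t ((j : ℕ) + 1) else 0)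
      (fun b : Fin (k + 1) =>
        if (b : ℕ) = (j : ℕ) then -s ((j : ℕ) + 1)
        else if (b : ℕ) = (j : ℕ) + 1 then s ((j : ℕ) + 2) else 0) i

/-
A relation `∑ c_j ∇f_j = 0` among the rows, with `c` extended by zero beyond its range, says
column by column that `(c_a − c_{a+1}) t_{a+1} = 0`, `(c_a − c_{a+1}) s_{a+2} = 0` and
`c_0 s_1 = 0` (rows indexed from `0`). Since `s_1, …, s_{l−1} ≠ 0`, the `t`-columns force `c`
to vanish from the left up to index `l − 2`; since `t_l, …, t_k ≠ 0`, the `s`-columns force it to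
vanish from the right down to index `l − 1`. So the `k` rows are linearly independent.
-/

open Matrix

namespace JacMat

section ZeroExtend

variable {R : Type*} {k : ℕ}

def zeroExtend [Zero R] (c : Fin k → R) (n : ℕ) : R :=
  if h : n < k then c ⟨n, h⟩ else 0

lemma zeroExtend_val [Zero R] (c : Fin k → R) (j : Fin k) : zeroExtend c j = c j := by
  simp [zeroExtend]

lemma zeroExtend_of_le [Zero R] (c : Fin k → R) {n : ℕ} (hn : k ≤ n) :
    zeroExtend c n = 0 := by
  simp [zeroExtend, not_lt.mpr hn]

lemma sum_ite_val_eq [AddCommMonoid R] (c : Fin k → R) (n : ℕ) :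
    ∑ j : Fin k, (if n = j then c j else 0) = zeroExtend c n := by
  by_cases hn : n < k
  · rw [Finset.sum_eq_single ⟨n, hn⟩ (fun j _ hj => if_neg fun h => hj (Fin.ext h.symm))
      (by simp)]
    simp [zeroExtend, hn]
  · rw [zeroExtend_of_le c (not_lt.mp hn)]
    exact Finset.sum_eq_zero fun j _ => if_neg (by omega)

variable [CommRing R]

lemma sum_mul_bidiagonal_succ (c : Fin k → R) (a : ℕ) (x : R) :
    ∑ j : Fin k, c j * (if a + 1 = j then -x else if a + 1 = j + 1 then x else 0) =
      (zeroExtend c a - zeroExtend c (a + 1)) * x := by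
  have split : ∀ j : Fin k, c j * (if a + 1 = j then -x else if a + 1 = j + 1 then x else 0) =
      (if a = j then c j else 0) * x - (if a + 1 = j then c j else 0) * x := by
    intro j
    split_ifs <;> first | omega | contradiction | ring
  simp only [split, Finset.sum_sub_distrib, ← Finset.sum_mul, sum_ite_val_eq, sub_mul]

lemma sum_mul_bidiagonal_zero (c : Fin k → R) (x : R) :
    ∑ j : Fin k, c j * (if (0 : ℕ) = j then -x else if (0 : ℕ) = j + 1 then x else 0) =
      -(zeroExtend c 0 * x) := by
  have split : ∀ j : Fin k,
      c j * (if (0 : ℕ) = j then -x else if (0 : ℕ) = j + 1 then x else 0) =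
        -((if (0 : ℕ) = j then c j else 0) * x) := by
    intro j
    split_ifs <;> first | omega | contradiction | ring
  simp only [split, Finset.sum_neg_distrib, ← Finset.sum_mul, sum_ite_val_eq]

end ZeroExtend

variable {K : Type*} [Field K] {k : ℕ}

variable (s t : ℕ → K)

lemma jacMat_inl (j : Fin k) (a : Fin (k + 1)) :
    jacMat k s t j (Sum.inl a) =
      if (a : ℕ) = j then -t a else if (a : ℕ) = j + 1 then t a else 0 := by
  simp only [jacMat, of_apply, Sum.elim_inl]
  split_ifs <;> simp_all

lemma jacMat_inr (j : Fin k) (a : Fin (k + 1)) :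
    jacMat k s t j (Sum.inr a) =
      if (a : ℕ) = j then -s (a + 1) else if (a : ℕ) = j + 1 then s (a + 1) else 0 := by
  simp only [jacMat, of_apply, Sum.elim_inr]
  split_ifs <;> simp_all

lemma vecMul_jacMat_inl_succ (c : Fin k → K) (a : ℕ) (ha : a + 1 < k + 1) :
    (c ᵥ* jacMat k s t) (Sum.inl ⟨a + 1, ha⟩) =
      (zeroExtend c a - zeroExtend c (a + 1)) * t (a + 1) := by
  simp only [vecMul, dotProduct, jacMat_inl, sum_mul_bidiagonal_succ]

lemma vecMul_jacMat_inr_succ (c : Fin k → K) (a : ℕ) (ha : a + 1 < k + 1) :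
    (c ᵥ* jacMat k s t) (Sum.inr ⟨a + 1, ha⟩) =
      (zeroExtend c a - zeroExtend c (a + 1)) * s (a + 2) := by
  simp only [vecMul, dotProduct, jacMat_inr, sum_mul_bidiagonal_succ]

lemma vecMul_jacMat_inr_zero (c : Fin k → K) :
    (c ᵥ* jacMat k s t) (Sum.inr 0) = -(zeroExtend c 0 * s 1) := by
  simp only [vecMul, dotProduct, jacMat_inr, Fin.val_zero, zero_add, sum_mul_bidiagonal_zero]

variable {s t}

lemma zeroExtend_eq_zero_of_add_two_le {l : ℕ} (hs : ∀ j, 1 ≤ j → j + 1 ≤ l → s j ≠ 0)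
    {c : Fin k → K} (hc : c ᵥ* jacMat k s t = 0) :
    ∀ a, a + 2 ≤ l → zeroExtend c a = 0
  | 0, hl => by
    have h := vecMul_jacMat_inr_zero s t c
    rw [hc, Pi.zero_apply, eq_comm, neg_eq_zero] at h
    exact (mul_eq_zero.mp h).resolve_right (hs 1 le_rfl (by omega))
  | a + 1, hl => by
    by_cases ha : a + 1 < k
    · have h := vecMul_jacMat_inr_succ s t c a (by omega)
      rw [hc, Pi.zero_apply, eq_comm] at h
      have hstep := sub_eq_zero.mp ((mul_eq_zero.mp h).resolve_right (hs (a + 2) (by omega) hl))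
      rw [← hstep, zeroExtend_eq_zero_of_add_two_le hs hc a (by omega)]
    · exact zeroExtend_of_le c (by omega)

lemma zeroExtend_eq_zero_of_le_add_one {l : ℕ} (ht : ∀ j, l ≤ j → j ≤ k → t j ≠ 0)
    {c : Fin k → K} (hc : c ᵥ* jacMat k s t = 0) (a : ℕ) (hl : l ≤ a + 1) :
    zeroExtend c a = 0 := by
  induction h : k - a generalizing a with
  | zero => exact zeroExtend_of_le c (by omega)
  | succ n ih =>
    have h1 := vecMul_jacMat_inl_succ s t c a (by omega)
    rw [hc, Pi.zero_apply, eq_comm] at h1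
    have hstep := sub_eq_zero.mp
      ((mul_eq_zero.mp h1).resolve_right (ht (a + 1) hl (by omega)))
    rw [hstep, ih (a + 1) (by omega) (by omega)]

theorem linearIndependent_jacMat {l : ℕ} (ht : ∀ j, l ≤ j → j ≤ k → t j ≠ 0)
    (hs : ∀ j, 1 ≤ j → j + 1 ≤ l → s j ≠ 0) :
    LinearIndependent K (jacMat k s t).row := by
  refine Fintype.linearIndependent_iff.mpr fun c hc i => ?_
  replace hc : c ᵥ* jacMat k s t = 0 := by rwa [vecMul_eq_sum]
  rw [← zeroExtend_val c i]
  rcases le_or_gt ((i : ℕ) + 2) l with hi | hi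
  · exact zeroExtend_eq_zero_of_add_two_le hs hc i hi
  · exact zeroExtend_eq_zero_of_le_add_one ht hc i (by omega)

end JacMat

open JacMat in
theorem stmt_7_general {K : Type*} [Field K] (k l : ℕ) (s t : ℕ → K)
    (ht : ∀ j ≤ k, (t j ≠ 0 ↔ l ≤ j))
    (hs : ∀ j, 1 ≤ j → j + 1 ≤ l → s j ≠ 0) :
    (jacMat k s t).rank = k := by
  have hli := linearIndependent_jacMat (fun j hlj hjk => (ht j hjk).mpr hlj) hs
  rw [hli.rank_matrix, Fintype.card_fin]

/-- At a point satisfying the relations, where for some `l` one has `t_j ≠ 0` exactly for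
`j ≥ l` and `s_j ≠ 0` for `j ≤ l−1` (and no `s_j, t_j` simultaneously zero), the Jacobian
matrix of `f_1, …, f_k` has rank exactly `k`. -/
theorem stmt_7 {K : Type*} [Field K] (k l : ℕ) (s t : ℕ → K)
    (hrel : ∀ j, 1 ≤ j → j ≤ k → s (j + 1) * t j = s j * t (j - 1))
    (hl : l ≤ k + 1)
    (ht : ∀ j ≤ k, (t j ≠ 0 ↔ l ≤ j))
    (hs : ∀ j, 1 ≤ j → j + 1 ≤ l → s j ≠ 0)
    (hpair : ∀ j, 1 ≤ j → j ≤ k → ¬(s j = 0 ∧ t j = 0)) :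
    (jacMat k s t).rank = k :=
  stmt_7_general k l s t ht hs
end

section
/- Let N be a lattice of rank d, M = Hom(N,ℤ), and let e_{i_0}, e_{i_1}, ..., e_{i_{k+1}} ∈ N be collinear lattice points with e_{i_j} = e_{i_0} + (j/(k+1))(e_{i_{k+1}} − e_{i_0}). Suppose (x_1,...,x_n) ∈ (ℂ^×)^n satisfies ∏_{i=1}^n x_i^{⟨m, e_i⟩} = 1 for all m ∈ M. Define s_j := x_{i_0}⋯x_{i_{j-1}}, t_j := x_{i_{j+1}}⋯x_{i_{k+1}}, y_i := x_i for i with e_i ∉ {e_{i_0},...,e_{i_{k+1}}}. Then for every homomorphism m̃ : N ⊕ ℤ^k → ℤ that vanishes on ℤ^k, one has ∏_{e_i∉Γ*} y_i^{⟨m̃, ẽ_i⟩} ∏_{j=1}^{k+1} s_j^{⟨m̃, s̃_j⟩} t_{j-1}^{⟨m̃, t̃_{j-1}⟩} = 1, where s̃_j, t̃_j are defined by s̃_j = v_j (j ≤ k), s̃_{k+1} = e_{i_0} − v_1 − ⋯ − v_k, t̃_{j-1} = v_j + (e_{i_{k+1}}−e_{i_0})/(k+1), t̃_k = e_{i_0}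 − v_1 − ⋯ − v_k + (e_{i_{k+1}}−e_{i_0})/(k+1), and ẽ_i = e_i. -/
/-- `s̃_j` for `j = 1,…,k+1` in `N ⊕ ℤᵏ` where `N = ℤ^d`. -/
def stilP (d k : ℕ) (e : Fin d → ℤ) (j : ℕ) : (Fin d → ℤ) × (Fin k → ℤ) :=
  if j = k + 1 then (e, fun _ => -1)
  else (0, fun i => if (i : ℕ) + 1 = j then 1 else 0)

/-- `t̃_j` for `j = 0,…,k`. -/
def ttilP (d k : ℕ) (e w : Fin d → ℤ) (j : ℕ) : (Fin d → ℤ) × (Fin k → ℤ) :=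
  stilP d k e (j + 1) + (w, 0)

/-- If `(x_1,…,x_n) ∈ (ℂ^×)^n` satisfies `∏ x_i^{⟨m,e_i⟩} = 1` for all `m ∈ M`, and
`s_j := x_{i_0}⋯x_{i_{j-1}}`, `t_j := x_{i_{j+1}}⋯x_{i_{k+1}}`, `y_i := x_i` for
`e_i ∉ Γ*`, then for every `m̃ : N ⊕ ℤᵏ → ℤ` vanishing on `ℤᵏ`,
`∏_{e_i∉Γ*} y_i^{⟨m̃,ẽ_i⟩} ∏_{j=1}^{k+1} s_j^{⟨m̃,s̃_j⟩} t_{j-1}^{⟨m̃,t̃_{j-1}⟩} = 1`. -/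
theorem stmt_11 (d k n : ℕ) (e : Fin n → Fin d → ℤ) (ι : ℕ → Fin n)
    (hι : ∀ a ≤ k + 1, ∀ b ≤ k + 1, ι a = ι b → a = b)
    (w : Fin d → ℤ)
    (hcol : ∀ j ≤ k + 1, e (ι j) = e (ι 0) + j • w)
    (x : Fin n → ℂˣ)
    (hx : ∀ m : (Fin d → ℤ) →ₗ[ℤ] ℤ, ∏ i, x i ^ m (e i) = 1)
    (mt : ((Fin d → ℤ) × (Fin k → ℤ)) →ₗ[ℤ] ℤ)
    (hmt : ∀ v : Fin k → ℤ, mt (0, v) = 0) :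
    (∏ i ∈ Finset.univ \ Finset.image (fun a => ι a) (Finset.range (k + 2)),
        x i ^ mt (e i, 0)) *
      ∏ j ∈ Finset.Icc 1 (k + 1),
        ((∏ a ∈ Finset.range j, x (ι a)) ^ mt (stilP d k (e (ι 0)) j) *
          (∏ a ∈ Finset.Icc j (k + 1), x (ι a)) ^
            mt (ttilP d k (e (ι 0)) w (j - 1))) = 1 := by
  classical
  set A : ℤ := mt (e (ι 0), 0) with hA
  set W : ℤ := mt (w, 0) with hW
  have hm : ∀ (v : Fin d → ℤ) (u : Fin k → ℤ), mt (v, u) = mt (v, 0) := by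
    intro v u
    have h1 : ((v, u) : (Fin d → ℤ) × (Fin k → ℤ)) = (v, 0) + (0, u) := by simp
    rw [h1, map_add, hmt, add_zero]
  have hst : ∀ j : ℕ, mt (stilP d k (e (ι 0)) j) = if j = k + 1 then A else 0 := by
    intro j
    by_cases h : j = k + 1
    · simp only [stilP, h, if_pos rfl, if_true]
      rw [hm]
    · simp only [stilP, h, if_false]
      rw [hmt]
  have htt : ∀ j : ℕ, 1 ≤ j →
      mt (ttilP d k (e (ι 0)) w (j - 1)) = W + if j = k + 1 then A else 0 := by
    intro j hj
    have h1 : j - 1 + 1 = j := Nat.succ_pred_eq_of_pos hj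
    rw [ttilP, h1, map_add, hst, add_comm]
  -- the key relation
  have key := hx (mt.comp (LinearMap.inl ℤ (Fin d → ℤ) (Fin k → ℤ)))
  simp only [LinearMap.comp_apply, LinearMap.inl_apply] at key
  have hsub : Finset.image (fun a => ι a) (Finset.range (k + 2)) ⊆ Finset.univ :=
    Finset.subset_univ _
  rw [← key, ← Finset.prod_sdiff hsub]
  congr 1
  have hinj : ∀ a ∈ Finset.range (k + 2), ∀ b ∈ Finset.range (k + 2),
      ι a = ι b → a = b := by
    intro a ha b hb h
    exact hι a (Nat.lt_succ_iff.mp (Finset.mem_range.mp ha)) b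
      (Nat.lt_succ_iff.mp (Finset.mem_range.mp hb)) h
  rw [Finset.prod_image hinj]
  -- compute the RHS
  have hR : ∀ a ∈ Finset.range (k + 2), x (ι a) ^ mt (e (ι a), 0)
      = x (ι a) ^ A * (x (ι a) ^ a) ^ W := by
    intro a ha
    have haa : a ≤ k + 1 := Nat.lt_succ_iff.mp (Finset.mem_range.mp ha)
    have h1 : ((e (ι a), 0) : (Fin d → ℤ) × (Fin k → ℤ))
        = (e (ι 0), 0) + a • ((w, 0) : (Fin d → ℤ) × (Fin k → ℤ)) := by
      rw [hcol a haa]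
      simp [Prod.ext_iff]
    rw [h1, map_add, map_nsmul, nsmul_eq_mul, zpow_add, zpow_mul, zpow_natCast]
  have hRHS : ∏ a ∈ Finset.range (k + 2), x (ι a) ^ mt (e (ι a), 0)
      = ((∏ a ∈ Finset.range (k + 1), x (ι a)) * x (ι (k + 1))) ^ A *
        (∏ a ∈ Finset.range (k + 2), x (ι a) ^ a) ^ W := by
    rw [Finset.prod_congr rfl hR, Finset.prod_mul_distrib, Finset.prod_zpow,
      Finset.prod_zpow, Finset.prod_range_succ]
  rw [hRHS]
  -- compute the LHS
  have hL : ∀ j ∈ Finset.Icc 1 (k + 1),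
      (∏ a ∈ Finset.range j, x (ι a)) ^ mt (stilP d k (e (ι 0)) j) *
        (∏ a ∈ Finset.Icc j (k + 1), x (ι a)) ^ mt (ttilP d k (e (ι 0)) w (j - 1))
      = (∏ a ∈ Finset.range j, x (ι a)) ^ (if j = k + 1 then A else 0) *
        ((∏ a ∈ Finset.Icc j (k + 1), x (ι a)) ^ W *
          (∏ a ∈ Finset.Icc j (k + 1), x (ι a)) ^ (if j = k + 1 then A else 0)) := by
    intro j hj
    rw [hst, htt j (Finset.mem_Icc.mp hj).1, zpow_add]
  have hsingle : ∀ (f : ℕ → ℂˣ),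
      ∏ j ∈ Finset.Icc 1 (k + 1), f j ^ (if j = k + 1 then A else 0) = f (k + 1) ^ A := by
    intro f
    rw [Finset.prod_eq_single_of_mem (k + 1) (Finset.mem_Icc.mpr ⟨by omega, le_rfl⟩)]
    · rw [if_pos rfl]
    · intro b _ hb
      rw [if_neg hb, zpow_zero]
  have hQ : ∏ j ∈ Finset.Icc 1 (k + 1), ∏ a ∈ Finset.Icc j (k + 1), x (ι a)
      = ∏ a ∈ Finset.range (k + 2), x (ι a) ^ a := by
    rw [Finset.prod_comm' (t' := Finset.range (k + 2)) (s' := fun a => Finset.Icc 1 a)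
      (by intro j a; simp only [Finset.mem_Icc, Finset.mem_range]; omega)]
    refine Finset.prod_congr rfl fun a _ => ?_
    rw [Finset.prod_const, Nat.card_Icc]
    norm_num
  have hLHS : ∏ j ∈ Finset.Icc 1 (k + 1),
      ((∏ a ∈ Finset.range j, x (ι a)) ^ mt (stilP d k (e (ι 0)) j) *
        (∏ a ∈ Finset.Icc j (k + 1), x (ι a)) ^ mt (ttilP d k (e (ι 0)) w (j - 1)))
      = (∏ a ∈ Finset.range (k + 1), x (ι a)) ^ A *
        ((∏ a ∈ Finset.range (k + 2), x (ι a) ^ a) ^ W *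
          (∏ a ∈ Finset.Icc (k + 1) (k + 1), x (ι a)) ^ A) := by
    rw [Finset.prod_congr rfl hL, Finset.prod_mul_distrib, Finset.prod_mul_distrib,
      Finset.prod_zpow, hQ,
      hsingle fun j => ∏ a ∈ Finset.range j, x (ι a),
      hsingle fun j => ∏ a ∈ Finset.Icc j (k + 1), x (ι a)]
  rw [hLHS, Finset.Icc_self, Finset.prod_singleton, mul_zpow,
    mul_comm ((∏ a ∈ Finset.range (k + 2), x (ι a) ^ a) ^ W) (x (ι (k + 1)) ^ A),
    ← mul_assoc]
end
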